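/- Let g ∈ ℂ[x₀,…,x₅] be a homogeneous polynomial of degree 3 such that every monomial occurring in g has nonpositive weight with respect to the weight vector (2,2,2,-1,-1,-4) (i.e. g is of type S5). Then every nonzero point p ∈ ℂ⁶ with p₃ = p₄ = p₅ = 0 and (∂g/∂x₅)(p) = 0 is a singular point of g. In particular, g is singular along the conic cut out on the plane {x₃ = x₄ = x₅ = 0} by the quadric ∂g/∂x₅. -/

import Mathlib

open MvPolynomial

/-- The weight of a monomial exponent `d` with respect to an integer weight vector `a`. -/
def monomialWeight (a : Fin 6 → ℤ) (d : Fin 6 →₀ ℕ) : ℤ :=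
  ∑ j, (d j : ℤ) * a j

/-- `p` is a singular point of the cubic `g`: `g` and all six first partial
derivatives of `g` vanish at `p`. -/
def IsSingularPoint (g : MvPolynomial (Fin 6) ℂ) (p : Fin 6 → ℂ) : Prop :=
  eval p g = 0 ∧ ∀ i : Fin 6, eval p (pderiv i g) = 0

lemma prod_zero_of (p : Fin 6 → ℂ) (hp3 : p 3 = 0) (hp4 : p 4 = 0) (hp5 : p 5 = 0)
    (m : Fin 6 →₀ ℕ) (h : 1 ≤ m 3 ∨ 1 ≤ m 4 ∨ 1 ≤ m 5) :
    (m.prod fun j e => p j ^ e) = 0 := by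
  rw [Finsupp.prod]
  rcases h with h | h | h
  · exact Finset.prod_eq_zero (i := 3) (Finsupp.mem_support_iff.mpr (by omega))
      (by rw [hp3, zero_pow (by omega)])
  · exact Finset.prod_eq_zero (i := 4) (Finsupp.mem_support_iff.mpr (by omega))
      (by rw [hp4, zero_pow (by omega)])
  · exact Finset.prod_eq_zero (i := 5) (Finsupp.mem_support_iff.mpr (by omega))
      (by rw [hp5, zero_pow (by omega)])

lemma key (g : MvPolynomial (Fin 6) ℂ) (hg : g.IsHomogeneous 3)
    (hwt : ∀ d ∈ g.support, monomialWeight ![2, 2, 2, -1, -1, -4] d ≤ 0)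
    {d : Fin 6 →₀ ℕ} (hd : d ∈ g.support) : 1 ≤ d 5 ∨ 2 ≤ d 3 + d 4 := by
  have h1 := hwt d hd
  have h2 : (Finsupp.weight 1) d = 3 := hg (mem_support_iff.mp hd)
  rw [Finsupp.weight_apply, Finsupp.sum_fintype _ _ (fun i => by simp)] at h2
  simp only [Pi.one_apply, smul_eq_mul, mul_one, Fin.sum_univ_six] at h2
  simp only [monomialWeight, Fin.sum_univ_six] at h1
  have e0 : (![2,2,2,-1,-1,-4] : Fin 6 → ℤ) 0 = 2 := rfl
  have e1 : (![2,2,2,-1,-1,-4] : Fin 6 → ℤ) 1 = 2 := rfl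
  have e2 : (![2,2,2,-1,-1,-4] : Fin 6 → ℤ) 2 = 2 := rfl
  have e3 : (![2,2,2,-1,-1,-4] : Fin 6 → ℤ) 3 = -1 := rfl
  have e4 : (![2,2,2,-1,-1,-4] : Fin 6 → ℤ) 4 = -1 := rfl
  have e5 : (![2,2,2,-1,-1,-4] : Fin 6 → ℤ) 5 = -4 := rfl
  rw [e0, e1, e2, e3, e4, e5] at h1
  omega

lemma typeS5_deriv_zero (g : MvPolynomial (Fin 6) ℂ) (hg : g.IsHomogeneous 3)
    (hwt : ∀ d ∈ g.support, monomialWeight ![2, 2, 2, -1, -1, -4] d ≤ 0)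
    (p : Fin 6 → ℂ) (hp3 : p 3 = 0) (hp4 : p 4 = 0) (hp5 : p 5 = 0)
    (i : Fin 6) (hi : i ≠ 5) : eval p (pderiv i g) = 0 := by
  conv_lhs => rw [g.as_sum]
  rw [map_sum, map_sum]
  apply Finset.sum_eq_zero
  intro d hd
  rw [pderiv_monomial, eval_monomial]
  have hk := key g hg hwt hd
  by_cases hdi : d i = 0
  · simp [hdi]
  · rw [prod_zero_of p hp3 hp4 hp5 _ ?_, mul_zero]
    simp only [Finsupp.tsub_apply, Finsupp.single_apply]
    rw [if_neg hi]
    split_ifs with h3 h4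
    · exact absurd (h3.symm.trans h4) (by decide)
    · omega
    · omega
    · omega

/-- A cubic of type S5 (all monomials of nonpositive weight w.r.t. `(2,2,2,-1,-1,-4)`) is
singular at every nonzero point of the plane `{x₃ = x₄ = x₅ = 0}` where `∂g/∂x₅` vanishes,
i.e. it is singular along the conic cut out on that plane by the quadric `∂g/∂x₅`. -/
theorem typeS5_singular_along_conic (g : MvPolynomial (Fin 6) ℂ) (hg : g.IsHomogeneous 3)
    (hwt : ∀ d ∈ g.support, monomialWeight ![2, 2, 2, -1, -1, -4] d ≤ 0)
    (p : Fin 6 → ℂ) (hp : p ≠ 0) (hp3 : p 3 = 0) (hp4 : p 4 = 0) (hp5 : p 5 = 0)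
    (hq : eval p (pderiv 5 g) = 0) :
    IsSingularPoint g p := by
  constructor
  · rw [eval_eq]
    apply Finset.sum_eq_zero
    intro d hd
    have := prod_zero_of p hp3 hp4 hp5 d (by have := key g hg hwt hd; omega)
    rw [Finsupp.prod] at this
    rw [this, mul_zero]
  · intro i
    by_cases hi : i = 5
    · rw [hi]; exact hq
    · exact typeS5_deriv_zero g hg hwt p hp3 hp4 hp5 i hi
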